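/- arXiv:2105.00955 — 2 statements merged into one kernel-verified Lean document; each statement's English description precedes it below -/
import Mathlib

section
/- Let A be a unital alternative *-algebra over ℂ containing a nontrivial symmetric idempotent e satisfying conditions (♠) and (♣), and let Φ : A → A be a map satisfying the *-Jordan n-derivation identity in the last two slots. Then Φ is additive: Φ(a + b) = Φ(a) + Φ(b) for all a, b ∈ A. -/
/-!
Write `D(a, b) = Φ(a + b) - Φ a - Φ b`. With `a₁ = ⋯ = a_{n-2} = 1` the hypothesis reads
`Φ(c (x • y)) = (d • x) • y + c (Φ x • y + x • Φ y)` with `c = 2^(n-2)` and a fixed `d`, so that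
`D(c (x • a), c (x • b)) = c (x • D(a, b))`: every `x` with `x • a = 0` or `x • b = 0` annihilates
`D(a, b)`, and symmetrically on the right. Since `e • T + (1 - e) • T = 2T`, an element killed by
both `e` and `1 - e` is zero, and conditions (♠) and (♣) detect a Peirce-homogeneous element
through its products with a single Peirce space of `e`. Taking for `x` the elements `e`, `1 - e`,
`2e - 1` and Peirce-homogeneous elements, one shows that `Φ` is additive across the Peirce
decomposition and on each `A_ij`, hence on `A = ⊕ A_ij`.
-/

/-- The Jordan `•`-product `a • b = ab + b a*`. -/
def starJordan {A : Type*} [NonAssocRing A] [StarRing A] (a b : A) : A :=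
  a * b + b * star a

/-- Left-normed iterated Jordan `•`-product of a list (empty list ↦ 0, junk value). -/
def leftStarJordan {A : Type*} [NonAssocRing A] [StarRing A] : List A → A
  | [] => 0
  | x :: xs => xs.foldl starJordan x

/-- The family `a₁ = ⋯ = a_{n-2} = 1`, `a_{n-1} = x`, `a_n = y`. -/
def lastTwoFamily {A : Type*} [One A] (n : ℕ) (x y : A) : Fin n → A :=
  fun i => if (i : ℕ) = n - 2 then x else if (i : ℕ) = n - 1 then y else 1

/-- `e₁ = e`, `e₂ = 1 - e`. -/
def peirceIdem {A : Type*} [NonAssocRing A] (e : A) : Fin 2 → A :=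
  fun i => if i = 0 then e else 1 - e

/-- Membership in the Peirce component `A_{ij}`: `eᵢ x = x` and `x eⱼ = x`. -/
def inPeirce {A : Type*} [NonAssocRing A] (e : A) (i j : Fin 2) (x : A) : Prop :=
  peirceIdem e i * x = x ∧ x * peirceIdem e j = x

/-- The inner derivation `Ξ_{y,z}(a) = y(za) − z(ya) + y(az) − (ya)z + (az)y − (ay)z`. -/
def innerDer {A : Type*} [NonAssocRing A] (y z a : A) : A :=
  y * (z * a) - z * (y * a) + y * (a * z) - (y * a) * z + (a * z) * y - (a * y) * z

class IsAlternative (A : Type*) [Mul A] : Prop where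
  left_alternative (a b : A) : a * a * b = a * (a * b)
  right_alternative (a b : A) : b * a * a = b * (a * a)

namespace IsAlternative

variable {A : Type*} [NonUnitalNonAssocRing A] [IsAlternative A]

theorem left_alternative_linear (a b c : A) :
    a * b * c + b * a * c = a * (b * c) + b * (a * c) := by
  have h := left_alternative (a + b) c
  simp only [add_mul, mul_add, left_alternative a c, left_alternative b c] at h
  linear_combination (norm := abel) h

theorem right_alternative_linear (a b c : A) :
    c * a * b + c * b * a = c * (a * b) + c * (b * a) := by
  have h := right_alternative (a + b) c
  simp only [add_mul, mul_add, right_alternative a c, right_alternative b c] at h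
  linear_combination (norm := abel) h

theorem flexible (a b : A) : a * b * a = a * (b * a) := by
  have h := left_alternative_linear a b a
  rw [right_alternative] at h
  exact add_right_cancel h

end IsAlternative

theorem eq_zero_of_add_self_eq_zero {G : Type*} [AddGroup G] [IsAddTorsionFree G] {x : G}
    (h : x + x = 0) : x = 0 :=
  self_eq_neg.mp (add_eq_zero_iff_eq_neg.mp h)

section Peirce

open IsAlternative

variable {A : Type*} [NonAssocRing A] {f x y : A} {i j k l : ℤ}

/-- `x` lies in the Peirce space of `f` on which left and right multiplication by `f` act as the
scalars `i` and `j`; the classical spaces `A₁₁, A₁₂, A₂₁, A₂₂` are `(i, j) = (1,1), (1,0), (0,1),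
(0,0)`. -/
def IsPeirce (f : A) (i j : ℤ) (x : A) : Prop :=
  f * x = i • x ∧ x * f = j • x

theorem IsPeirce.zero (f : A) (i j : ℤ) : IsPeirce f i j 0 := by
  simp [IsPeirce]

theorem IsPeirce.add (hx : IsPeirce f i j x) (hy : IsPeirce f i j y) : IsPeirce f i j (x + y) :=
  ⟨by rw [mul_add, hx.1, hy.1, smul_add], by rw [add_mul, hx.2, hy.2, smul_add]⟩

theorem IsPeirce.one_sub (hx : IsPeirce f i j x) : IsPeirce (1 - f) (1 - i) (1 - j) x :=
  ⟨by rw [sub_mul, one_mul, hx.1, sub_smul, one_smul],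
    by rw [mul_sub, mul_one, hx.2, sub_smul, one_smul]⟩

theorem IsPeirce.of_one_sub (hx : IsPeirce (1 - f) i j x) : IsPeirce f (1 - i) (1 - j) x := by
  simpa using hx.one_sub

theorem IsPeirce.star [StarRing A] (hf : IsSelfAdjoint f) (hx : IsPeirce f i j x) :
    IsPeirce f j i (star x) :=
  ⟨by rw [← hf.star_eq, ← star_mul, hx.2, star_zsmul],
    by rw [← hf.star_eq, ← star_mul, hx.1, star_zsmul]⟩

theorem IsPeirce.mul_add_mul_eq_self (hx : IsPeirce f i j x) (h : i + j = 1) :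
    f * x + x * f = x := by
  rw [hx.1, hx.2, ← add_smul, h, one_smul]

theorem IsPeirce.smul {𝕜 : Type*} [Field 𝕜] [Module 𝕜 A] [SMulCommClass 𝕜 A A]
    [IsScalarTower 𝕜 A A] (c : 𝕜) (hx : IsPeirce f i j x) : IsPeirce f i j (c • x) :=
  ⟨by rw [mul_smul_comm, hx.1, smul_comm], by rw [smul_mul_assoc, hx.2, smul_comm]⟩

theorem one_sub_mul_add_mul_one_sub {w : A} (h : f * w + w * f = w) :
    (1 - f) * w + w * (1 - f) = w := by
  rw [sub_mul, mul_sub, one_mul, mul_one]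
  linear_combination (norm := abel) -h

theorem peirce_decomposition (f z : A) :
    z = f * (z * f) + f * (z * (1 - f)) + (1 - f) * (z * f) + (1 - f) * (z * (1 - f)) := by
  simp only [mul_sub, sub_mul, mul_one, one_mul]
  abel

theorem IsIdempotentElem.isPeirce_one_one (hf : IsIdempotentElem f) : IsPeirce f 1 1 f :=
  ⟨by rw [hf.eq, one_smul], by rw [hf.eq, one_smul]⟩

variable [IsAlternative A]

theorem IsPeirce.mul (hx : IsPeirce f i j x) (hy : IsPeirce f k l y) :
    IsPeirce f (i + j - k) (k + l - j) (x * y) := by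
  constructor
  · have h := left_alternative_linear x f y
    rw [hx.1, hx.2, hy.1, smul_mul_assoc, smul_mul_assoc, mul_smul_comm] at h
    linear_combination (norm := module) -h
  · have h := right_alternative_linear y f x
    rw [hx.2, hy.1, hy.2, smul_mul_assoc, mul_smul_comm, mul_smul_comm] at h
    linear_combination (norm := module) h

theorem IsPeirce.eq_zero [IsAddTorsionFree A] (hf : IsIdempotentElem f) (hx : IsPeirce f i j x)
    (h : i * i ≠ i ∨ j * j ≠ j) : x = 0 := by
  have hl : (i * i - i) • x = 0 := by
    have := left_alternative f x
    rw [hf.eq, hx.1, mul_smul_comm, hx.1, smul_smul] at this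
    rw [sub_smul, this, sub_self]
  have hr : (j * j - j) • x = 0 := by
    have := right_alternative f x
    rw [hf.eq, hx.2, smul_mul_assoc, hx.2, smul_smul] at this
    rw [sub_smul, this, sub_self]
  rcases h with h | h
  · exact (IsAddTorsionFree.zsmul_eq_zero_iff_right (sub_ne_zero.mpr h)).mp hl
  · exact (IsAddTorsionFree.zsmul_eq_zero_iff_right (sub_ne_zero.mpr h)).mp hr

theorem IsPeirce.mul_eq_zero [IsAddTorsionFree A] (hf : IsIdempotentElem f)
    (hx : IsPeirce f i j x) (hy : IsPeirce f k l y)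
    (h : (i + j - k) * (i + j - k) ≠ i + j - k ∨ (k + l - j) * (k + l - j) ≠ k + l - j) :
    x * y = 0 :=
  (hx.mul hy).eq_zero hf h

theorem isPeirce_one_one_mul_mul (hf : IsIdempotentElem f) (z : A) :
    IsPeirce f 1 1 (f * (z * f)) := by
  refine ⟨?_, ?_⟩
  · rw [← left_alternative, hf.eq, one_smul]
  · rw [← flexible, right_alternative, hf.eq, flexible, one_smul]

theorem isPeirce_one_zero_mul_mul (hf : IsIdempotentElem f) (z : A) :
    IsPeirce f 1 0 (f * (z * (1 - f))) := by
  refine ⟨?_, ?_⟩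
  · rw [← left_alternative, hf.eq, one_smul]
  · rw [mul_sub, mul_one, mul_sub, sub_mul, (isPeirce_one_one_mul_mul hf z).2, one_smul,
      ← flexible, zero_smul, sub_self]

theorem isPeirce_zero_one_mul_mul (hf : IsIdempotentElem f) (z : A) :
    IsPeirce f 0 1 ((1 - f) * (z * f)) := by
  simpa using (isPeirce_one_zero_mul_mul hf.one_sub z).of_one_sub

theorem isPeirce_zero_zero_mul_mul (hf : IsIdempotentElem f) (z : A) :
    IsPeirce f 0 0 ((1 - f) * (z * (1 - f))) := by
  simpa using (isPeirce_one_one_mul_mul hf.one_sub z).of_one_sub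

theorem isPeirce_of_mul_add_mul_eq_self (hf : IsIdempotentElem f) {T : A}
    (hT : f * T + T * f = T) : IsPeirce f 1 0 (f * T) ∧ IsPeirce f 0 1 (T * f) := by
  have hfTf : f * (T * f) = 0 := by
    have h := congrArg (f * ·) hT
    simp only [mul_add, ← left_alternative, hf.eq] at h
    exact left_eq_add.mp h.symm
  refine ⟨⟨?_, ?_⟩, ⟨?_, ?_⟩⟩
  · rw [← left_alternative, hf.eq, one_smul]
  · rw [flexible, hfTf, zero_smul]
  · rw [hfTf, zero_smul]
  · rw [right_alternative, hf.eq, one_smul]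

end Peirce

section StarJordan

variable {A : Type*} [NonAssocRing A] [StarRing A] {f x : A}

theorem starJordan_add_left (a b y : A) :
    starJordan (a + b) y = starJordan a y + starJordan b y := by
  simp only [starJordan, add_mul, mul_add, star_add]; abel

theorem starJordan_add_right (x a b : A) :
    starJordan x (a + b) = starJordan x a + starJordan x b := by
  simp only [starJordan, mul_add, add_mul]; abel

theorem starJordan_sub_left (a b y : A) :
    starJordan (a - b) y = starJordan a y - starJordan b y := by
  simp only [starJordan, sub_mul, mul_sub, star_sub]; abel

theorem starJordan_sub_right (x a b : A) :
    starJordan x (a - b) = starJordan x a - starJordan x b := by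
  simp only [starJordan, mul_sub, sub_mul]; abel

@[simp] theorem starJordan_zero_left (y : A) : starJordan 0 y = 0 := by simp [starJordan]

@[simp] theorem starJordan_zero_right (x : A) : starJordan x 0 = 0 := by simp [starJordan]

theorem starJordan_nsmul_left (m : ℕ) (x y : A) : starJordan (m • x) y = m • starJordan x y := by
  simp only [starJordan, star_nsmul, smul_mul_assoc, mul_smul_comm, smul_add]

theorem starJordan_nsmul_one_left (m : ℕ) (x : A) : starJordan (m • 1) x = (2 * m) • x := by
  rw [starJordan_nsmul_left, starJordan, star_one, one_mul, mul_one, ← two_nsmul]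
  module

theorem starJordan_sum_left {ι : Type*} (s : Finset ι) (g : ι → A) (y : A) :
    starJordan (∑ i ∈ s, g i) y = ∑ i ∈ s, starJordan (g i) y :=
  map_sum (AddMonoidHom.mk' (starJordan · y) (starJordan_add_left · · y)) g s

theorem starJordan_add_starJordan_one_sub (f x : A) :
    starJordan f x + starJordan (1 - f) x = x + x := by
  rw [← starJordan_add_left, add_sub_cancel, starJordan, star_one, one_mul, mul_one]

theorem IsPeirce.starJordan_idem_eq_zero (hf : IsSelfAdjoint f) (hx : IsPeirce f 0 0 x) :
    starJordan f x = 0 := by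
  rw [starJordan, hf.star_eq, hx.1, hx.2, zero_smul, add_zero]

theorem IsPeirce.starJordan_idem_eq_add_self (hf : IsSelfAdjoint f) (hx : IsPeirce f 1 1 x) :
    starJordan f x = x + x := by
  rw [starJordan, hf.star_eq, hx.1, hx.2, one_smul]

variable [IsAddTorsionFree A]

theorem eq_zero_of_starJordan_eq_zero (h : starJordan f x = 0) (h' : starJordan (1 - f) x = 0) :
    x = 0 :=
  eq_zero_of_add_self_eq_zero (by rw [← starJordan_add_starJordan_one_sub f, h, h', add_zero])

theorem starJordan_reflection_eq_zero_iff (hf : IsSelfAdjoint f) :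
    starJordan (f + f - 1) x = 0 ↔ f * x + x * f = x := by
  have h : starJordan (f + f - 1) x = (f * x + x * f - x) + (f * x + x * f - x) := by
    rw [starJordan, star_sub, star_add, hf.star_eq, star_one]
    noncomm_ring
  rw [h]
  exact ⟨fun h => sub_eq_zero.mp (eq_zero_of_add_self_eq_zero h),
    fun h => by rw [h, sub_self, add_zero]⟩

end StarJordan

/-- Condition (♠) for `f`; condition (♣) is this condition for `1 - f`. -/
def IsRightSeparating {A : Type*} [Mul A] [Zero A] (f : A) : Prop :=
  ∀ x : A, (∀ r : A, x * r * f = 0) → x = 0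

section Separation

open IsAlternative

variable {A : Type*} [NonAssocRing A] [IsAlternative A] [IsAddTorsionFree A] {f v : A} {i : ℤ}

theorem IsPeirce.eq_zero_of_mul_isPeirce_one_one (hf : IsIdempotentElem f)
    (hsep : IsRightSeparating f) (hv : IsPeirce f i 1 v)
    (h : ∀ t, IsPeirce f 1 1 t → v * t = 0) : v = 0 := by
  refine hsep v fun r => ?_
  rw [peirce_decomposition f r]
  simp only [mul_add, add_mul]
  rw [h _ (isPeirce_one_one_mul_mul hf r), (hv.mul (isPeirce_one_zero_mul_mul hf r)).2,
    (hv.mul (isPeirce_zero_one_mul_mul hf r)).2,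
    hv.mul_eq_zero hf (isPeirce_zero_zero_mul_mul hf r) (Or.inr (by decide))]
  simp

theorem IsPeirce.eq_zero_of_mul_isPeirce_one_zero (hf : IsIdempotentElem f)
    (hsep : IsRightSeparating (1 - f)) (hv : IsPeirce f 1 1 v)
    (h : ∀ t, IsPeirce f 1 0 t → v * t = 0) : v = 0 := by
  refine hsep v fun r => ?_
  rw [peirce_decomposition f r]
  simp only [mul_add, add_mul]
  rw [(hv.mul (isPeirce_one_one_mul_mul hf r)).one_sub.2, h _ (isPeirce_one_zero_mul_mul hf r),
    hv.mul_eq_zero hf (isPeirce_zero_one_mul_mul hf r) (Or.inl (by decide)),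
    hv.mul_eq_zero hf (isPeirce_zero_zero_mul_mul hf r) (Or.inl (by decide))]
  simp

end Separation

section PeirceStarJordan

variable {A : Type*} [NonAssocRing A] [StarRing A] [IsAlternative A] [IsAddTorsionFree A]
  {f a t : A}

theorem mul_eq_zero_of_forall_starJordan (hf : IsStarProjection f)
    (hsep : IsRightSeparating f) {T : A} (hT : f * T + T * f = T)
    (h : ∀ t, IsPeirce f 1 1 t → starJordan T t = 0) : T * f = 0 := by
  obtain ⟨hu, hv⟩ := isPeirce_of_mul_add_mul_eq_self hf.isIdempotentElem hT
  have hf' := hf.isIdempotentElem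
  refine hv.eq_zero_of_mul_isPeirce_one_one hf' hsep fun t ht => ?_
  have h0 := h t ht
  rw [starJordan, ← hT, add_mul, star_add, mul_add, hu.mul_eq_zero hf' ht (Or.inr (by decide)),
    ht.mul_eq_zero hf' (hu.star hf.isSelfAdjoint) (Or.inl (by decide)), zero_add, zero_add] at h0
  have h1 := congrArg (· * f) h0
  simp only [add_mul, zero_mul] at h1
  rw [(hv.mul ht).2, (ht.mul (hv.star hf.isSelfAdjoint)).2] at h1
  simpa using h1

theorem IsPeirce.starJordan_eq_mul (hf : IsStarProjection f) (ha : IsPeirce f 1 1 a)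
    (ht : IsPeirce f 1 0 t) : starJordan a t = a * t := by
  rw [starJordan, ht.mul_eq_zero hf.isIdempotentElem (ha.star hf.isSelfAdjoint)
    (Or.inr (by decide)), add_zero]

theorem starJordan_star_eq_mul_of_isPeirce (hf : IsStarProjection f) (hs : IsPeirce f 0 0 t)
    (ha : IsPeirce f 1 0 a) : starJordan (star t) a = a * t := by
  rw [starJordan, star_star, (hs.star hf.isSelfAdjoint).mul_eq_zero hf.isIdempotentElem ha
    (Or.inl (by decide)), zero_add]

theorem IsPeirce.starJordan_eq_zero_of_isPeirce_one_one (hf : IsStarProjection f)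
    (ha : IsPeirce f 1 0 a) (ht : IsPeirce f 1 1 t) : starJordan a t = 0 := by
  rw [starJordan, ha.mul_eq_zero hf.isIdempotentElem ht (Or.inr (by decide)),
    ht.mul_eq_zero hf.isIdempotentElem (ha.star hf.isSelfAdjoint) (Or.inl (by decide)), add_zero]

theorem IsPeirce.starJordan_eq_zero_of_isPeirce_zero_zero (hf : IsStarProjection f)
    (ha : IsPeirce f 0 1 a) (ht : IsPeirce f 0 0 t) : starJordan a t = 0 := by
  rw [starJordan, ha.mul_eq_zero hf.isIdempotentElem ht (Or.inr (by decide)),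
    ht.mul_eq_zero hf.isIdempotentElem (ha.star hf.isSelfAdjoint) (Or.inl (by decide)), add_zero]

theorem isPeirce_zero_zero_of_starJordan_eq_zero (hf : IsStarProjection f) {T : A}
    (h : starJordan f T = 0) : IsPeirce f 0 0 T := by
  rw [starJordan, hf.isSelfAdjoint.star_eq] at h
  have h₁ : f * T + f * (T * f) = 0 := by
    simpa [mul_add, ← IsAlternative.left_alternative, hf.isIdempotentElem.eq] using
      congrArg (f * ·) h
  have h₂ : f * (T * f) + T * f = 0 := by
    simpa [add_mul, IsAlternative.right_alternative, hf.isIdempotentElem.eq,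
      IsAlternative.flexible] using congrArg (· * f) h
  have hcomm : f * T = T * f := by linear_combination (norm := abel) h₁ - h₂
  have hfT : f * T = 0 := eq_zero_of_add_self_eq_zero (by rwa [← hcomm] at h)
  exact ⟨by rw [hfT, zero_smul], by rw [← hcomm, hfT, zero_smul]⟩

end PeirceStarJordan

/-- The identity `Φ(c (x • y)) = (d • x) • y + c (Φ x • y) + c (x • Φ y)`, to which the
`*`-Jordan `n`-derivation identity with `a₁ = ⋯ = a_{n-2} = 1` reduces, with `c = 2^(n-2)`. -/
def ScaledJordanLeibniz {A 𝕜 : Type*} [NonAssocRing A] [StarRing A] [SMul 𝕜 A]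
    (Φ : A → A) (c : 𝕜) (d : A) : Prop :=
  ∀ x y : A, Φ (c • starJordan x y) =
    starJordan (starJordan d x) y + c • starJordan (Φ x) y + c • starJordan x (Φ y)

def addDefect {A : Type*} [AddGroup A] (Φ : A → A) (a b : A) : A :=
  Φ (a + b) - Φ a - Φ b

section AddDefect

variable {A : Type*} [AddCommGroup A] {Φ : A → A} {a b : A}

theorem addDefect_comm (Φ : A → A) (a b : A) : addDefect Φ a b = addDefect Φ b a := by
  rw [addDefect, addDefect, add_comm a b]; abel

theorem addDefect_eq_zero_iff : addDefect Φ a b = 0 ↔ Φ (a + b) = Φ a + Φ b := by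
  rw [addDefect, sub_sub, sub_eq_zero]

end AddDefect

namespace ScaledJordanLeibniz

variable {A 𝕜 : Type*} [NonAssocRing A] [StarRing A] [Field 𝕜] [Module 𝕜 A]
  {Φ : A → A} {c : 𝕜} {d f : A}

theorem map_zero (hΦ : ScaledJordanLeibniz Φ c d) : Φ 0 = 0 := by
  simpa using hΦ 0 0

theorem addDefect_zero_right (hΦ : ScaledJordanLeibniz Φ c d) (a : A) : addDefect Φ a 0 = 0 := by
  rw [addDefect, add_zero, hΦ.map_zero, sub_zero, sub_self]

theorem addDefect_zero_left (hΦ : ScaledJordanLeibniz Φ c d) (b : A) : addDefect Φ 0 b = 0 := by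
  rw [addDefect_comm, hΦ.addDefect_zero_right]

theorem addDefect_smul_starJordan_right (hΦ : ScaledJordanLeibniz Φ c d) (x a b : A) :
    addDefect Φ (c • starJordan x a) (c • starJordan x b) = c • starJordan x (addDefect Φ a b) := by
  rw [addDefect, addDefect, ← smul_add, ← starJordan_add_right, hΦ, hΦ, hΦ]
  simp only [starJordan_add_right, starJordan_sub_right, smul_add, smul_sub]
  abel

theorem addDefect_smul_starJordan_left (hΦ : ScaledJordanLeibniz Φ c d) (a b y : A) :
    addDefect Φ (c • starJordan a y) (c • starJordan b y) = c • starJordan (addDefect Φ a b) y := by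
  rw [addDefect, addDefect, ← smul_add, ← starJordan_add_left, hΦ, hΦ, hΦ]
  simp only [starJordan_add_left, starJordan_add_right, starJordan_sub_left, smul_add, smul_sub]
  abel

variable {x y a b : A}

theorem starJordan_addDefect_eq_zero (hΦ : ScaledJordanLeibniz Φ c d) (hc : c ≠ 0)
    (h : addDefect Φ (c • starJordan x a) (c • starJordan x b) = 0) :
    starJordan x (addDefect Φ a b) = 0 := by
  rwa [hΦ.addDefect_smul_starJordan_right, smul_eq_zero, or_iff_right hc] at h

theorem starJordan_addDefect_eq_zero_of_left (hΦ : ScaledJordanLeibniz Φ c d) (hc : c ≠ 0)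
    (ha : starJordan x a = 0) (b : A) : starJordan x (addDefect Φ a b) = 0 :=
  hΦ.starJordan_addDefect_eq_zero hc (by rw [ha, smul_zero, hΦ.addDefect_zero_left])

theorem starJordan_addDefect_eq_zero_of_right (hΦ : ScaledJordanLeibniz Φ c d) (hc : c ≠ 0)
    (hb : starJordan x b = 0) (a : A) : starJordan x (addDefect Φ a b) = 0 :=
  hΦ.starJordan_addDefect_eq_zero hc (by rw [hb, smul_zero, hΦ.addDefect_zero_right])

theorem addDefect_starJordan_eq_zero (hΦ : ScaledJordanLeibniz Φ c d) (hc : c ≠ 0)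
    (h : addDefect Φ (c • starJordan a y) (c • starJordan b y) = 0) :
    starJordan (addDefect Φ a b) y = 0 := by
  rwa [hΦ.addDefect_smul_starJordan_left, smul_eq_zero, or_iff_right hc] at h

theorem addDefect_starJordan_eq_zero_of_left (hΦ : ScaledJordanLeibniz Φ c d) (hc : c ≠ 0)
    (ha : starJordan a y = 0) (b : A) : starJordan (addDefect Φ a b) y = 0 :=
  hΦ.addDefect_starJordan_eq_zero hc (by rw [ha, smul_zero, hΦ.addDefect_zero_left])

theorem addDefect_starJordan_eq_zero_of_right (hΦ : ScaledJordanLeibniz Φ c d) (hc : c ≠ 0)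
    (hb : starJordan b y = 0) (a : A) : starJordan (addDefect Φ a b) y = 0 :=
  hΦ.addDefect_starJordan_eq_zero hc (by rw [hb, smul_zero, hΦ.addDefect_zero_right])

variable [IsAddTorsionFree A]

theorem addDefect_eq_zero_of_mul_add_mul_eq_self (hΦ : ScaledJordanLeibniz Φ c d) (hc : c ≠ 0)
    (hf : IsSelfAdjoint f) {a w : A} (ha : IsPeirce f 1 1 a) (hw : f * w + w * f = w) :
    addDefect Φ a w = 0 := by
  have h₁ : starJordan (1 - f) (addDefect Φ a w) = 0 :=
    hΦ.starJordan_addDefect_eq_zero_of_left hc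
      (ha.one_sub.starJordan_idem_eq_zero (.sub (.one A) hf)) w
  have h₂ : starJordan (f + f - 1) (addDefect Φ a w) = 0 :=
    hΦ.starJordan_addDefect_eq_zero_of_right hc ((starJordan_reflection_eq_zero_iff hf).mpr hw) a
  refine eq_zero_of_starJordan_eq_zero ?_ h₁
  calc starJordan f (addDefect Φ a w)
      = starJordan (f + f - 1) (addDefect Φ a w) + starJordan (1 - f) (addDefect Φ a w) := by
        rw [← starJordan_add_left, sub_add_sub_cancel, add_sub_cancel_right]
    _ = 0 := by rw [h₁, h₂, add_zero]

theorem map_add_add_of_isPeirce [SMulCommClass 𝕜 A A] [IsScalarTower 𝕜 A A]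
    (hΦ : ScaledJordanLeibniz Φ c d) (hc : c ≠ 0) (hf : IsSelfAdjoint f) {x w z : A}
    (hx : IsPeirce f 1 1 x) (hw : f * w + w * f = w) (hz : IsPeirce f 0 0 z) :
    Φ (x + w + z) = Φ x + Φ w + Φ z := by
  have hxw := hΦ.addDefect_eq_zero_of_mul_add_mul_eq_self hc hf hx hw
  have hxwz : addDefect Φ (x + w) z = 0 := by
    refine eq_zero_of_starJordan_eq_zero
      (hΦ.starJordan_addDefect_eq_zero_of_right hc (hz.starJordan_idem_eq_zero hf) _)
      (hΦ.starJordan_addDefect_eq_zero hc ?_)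
    have hf' : IsSelfAdjoint (1 - f) := .sub (.one A) hf
    have hw' := one_sub_mul_add_mul_one_sub hw
    rw [starJordan_add_right, hx.one_sub.starJordan_idem_eq_zero hf', zero_add, starJordan,
      hf'.star_eq, hw', hz.one_sub.starJordan_idem_eq_add_self hf', addDefect_comm]
    refine hΦ.addDefect_eq_zero_of_mul_add_mul_eq_self hc hf'
      ((hz.one_sub.add hz.one_sub).smul c) ?_
    rw [mul_smul_comm, smul_mul_assoc, ← smul_add, hw']
  rw [addDefect_eq_zero_iff.mp hxwz, addDefect_eq_zero_iff.mp hxw]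

variable [IsAlternative A]

theorem addDefect_eq_zero_of_isPeirce_one_zero_of_isPeirce_zero_one
    (hΦ : ScaledJordanLeibniz Φ c d) (hc : c ≠ 0) (hf : IsStarProjection f)
    (hsep : IsRightSeparating f) (hsep' : IsRightSeparating (1 - f)) {b b' : A}
    (hb : IsPeirce f 1 0 b) (hb' : IsPeirce f 0 1 b') : addDefect Φ b b' = 0 := by
  have hT : f * addDefect Φ b b' + addDefect Φ b b' * f = addDefect Φ b b' :=
    (starJordan_reflection_eq_zero_iff hf.isSelfAdjoint).mp
      (hΦ.starJordan_addDefect_eq_zero_of_left hc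
        ((starJordan_reflection_eq_zero_iff hf.isSelfAdjoint).mpr (hb.mul_add_mul_eq_self rfl)) b')
  have h₁ : addDefect Φ b b' * f = 0 :=
    mul_eq_zero_of_forall_starJordan hf hsep hT fun t ht =>
      hΦ.addDefect_starJordan_eq_zero_of_left hc
        (hb.starJordan_eq_zero_of_isPeirce_one_one hf ht) b'
  have h₂ : addDefect Φ b b' * (1 - f) = 0 :=
    mul_eq_zero_of_forall_starJordan hf.one_sub hsep' (one_sub_mul_add_mul_one_sub hT) fun t ht =>
      hΦ.addDefect_starJordan_eq_zero_of_right hc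
        (hb'.starJordan_eq_zero_of_isPeirce_zero_zero hf ht.of_one_sub) b
  calc addDefect Φ b b' = addDefect Φ b b' * f + addDefect Φ b b' * (1 - f) := by
        rw [mul_sub, mul_one, add_sub_cancel]
    _ = 0 := by rw [h₁, h₂, add_zero]

variable [SMulCommClass 𝕜 A A] [IsScalarTower 𝕜 A A]

theorem map_add_add_add_of_isPeirce (hΦ : ScaledJordanLeibniz Φ c d) (hc : c ≠ 0)
    (hf : IsStarProjection f) (hsep : IsRightSeparating f) (hsep' : IsRightSeparating (1 - f))
    {z₁₁ z₁₀ z₀₁ z₀₀ : A} (h₁₁ : IsPeirce f 1 1 z₁₁) (h₁₀ : IsPeirce f 1 0 z₁₀)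
    (h₀₁ : IsPeirce f 0 1 z₀₁) (h₀₀ : IsPeirce f 0 0 z₀₀) :
    Φ (z₁₁ + z₁₀ + z₀₁ + z₀₀) = Φ z₁₁ + Φ z₁₀ + Φ z₀₁ + Φ z₀₀ := by
  have hw : f * (z₁₀ + z₀₁) + (z₁₀ + z₀₁) * f = z₁₀ + z₀₁ := by
    rw [mul_add, add_mul, add_add_add_comm, h₁₀.mul_add_mul_eq_self rfl,
      h₀₁.mul_add_mul_eq_self rfl]
  rw [add_assoc z₁₁, hΦ.map_add_add_of_isPeirce hc hf.isSelfAdjoint h₁₁ hw h₀₀,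
    addDefect_eq_zero_iff.mp
      (hΦ.addDefect_eq_zero_of_isPeirce_one_zero_of_isPeirce_zero_one hc hf hsep hsep' h₁₀ h₀₁),
    ← add_assoc (Φ z₁₁)]

/-- The identity behind `Φ (A₁₂ A₂₂ + A₁₂) = Φ (A₁₂ A₂₂) + Φ A₁₂`: apply the Leibniz rule with
`x = a + t` to the pair `b, 1 - f`, whose additivity defect vanishes, and expand both sides
along the Peirce decomposition. -/
theorem addDefect_add_addDefect_eq_zero (hΦ : ScaledJordanLeibniz Φ c d) (hc : c ≠ 0)
    (hf : IsStarProjection f) (hsep : IsRightSeparating f) (hsep' : IsRightSeparating (1 - f))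
    {a b t : A} (ha : IsPeirce f 1 0 a) (hb : IsPeirce f 1 0 b) (ht : IsPeirce f 0 0 t) :
    addDefect Φ (c • (b * star t)) (c • a) + addDefect Φ (c • (a * b)) (c • star a) = 0 := by
  have hf₁ := hf.isIdempotentElem
  have hf₂ := hf.isSelfAdjoint
  have ha' := ha.star hf₂
  have ht' := ht.star hf₂
  have e₁ : starJordan (a + t) b = b * star a + b * star t + a * b := by
    rw [starJordan, add_mul, star_add, mul_add, ht.mul_eq_zero hf₁ hb (Or.inl (by decide))]
    abel
  have e₂ : starJordan (a + t) (1 - f) = a + star a + (t + star t) := by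
    rw [starJordan, star_add, add_mul, mul_add,
      ha.one_sub.2, ht.one_sub.2, ha'.one_sub.1, ht'.one_sub.1]
    simp only [sub_zero, one_smul]
    abel
  have hba : IsPeirce f 1 1 (c • (b * star a)) := (hb.mul ha').smul c
  have hbt : IsPeirce f 1 0 (c • (b * star t)) := (hb.mul ht').smul c
  have hab : IsPeirce f 0 1 (c • (a * b)) := (ha.mul hb).smul c
  have htt : IsPeirce f 0 0 (c • (t + star t)) := (ht.add ht').smul c
  have h₀ := hΦ.addDefect_smul_starJordan_right (a + t) b (1 - f)
  rw [addDefect_comm Φ b, hΦ.addDefect_eq_zero_of_mul_add_mul_eq_self hc hf.one_sub.isSelfAdjoint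
    hf₁.one_sub.isPeirce_one_one (one_sub_mul_add_mul_one_sub (hb.mul_add_mul_eq_self rfl)),
    starJordan_zero_right, smul_zero, addDefect, e₁, e₂] at h₀
  have E₁ := hΦ.map_add_add_add_of_isPeirce hc hf hsep hsep' hba hbt hab (.zero f 0 0)
  have E₂ := hΦ.map_add_add_add_of_isPeirce hc hf hsep hsep' (.zero f 1 1) (ha.smul c)
    (ha'.smul c) htt
  have E₁₂ := hΦ.map_add_add_add_of_isPeirce hc hf hsep hsep' hba (hbt.add (ha.smul c))
    (hab.add (ha'.smul c)) htt
  simp only [add_zero, zero_add, hΦ.map_zero, smul_add] at E₁ E₂ E₁₂ h₀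
  rw [show c • (b * star a) + c • (b * star t) + c • (a * b) +
      (c • a + c • star a + (c • t + c • star t)) =
      c • (b * star a) + (c • (b * star t) + c • a) + (c • (a * b) + c • star a) +
      (c • t + c • star t) by abel, E₁, E₂, E₁₂] at h₀
  simp only [addDefect]
  linear_combination (norm := abel) h₀

theorem addDefect_mul_eq_zero (hΦ : ScaledJordanLeibniz Φ c d) (hc : c ≠ 0)
    (hf : IsStarProjection f) (hsep : IsRightSeparating f) (hsep' : IsRightSeparating (1 - f))
    {u s v : A} (hu : IsPeirce f 1 0 u) (hs : IsPeirce f 0 0 s) (hv : IsPeirce f 1 0 v) :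
    addDefect Φ (u * s) v = 0 := by
  have key := fun {t} (ht : IsPeirce f 0 0 t) => hΦ.addDefect_add_addDefect_eq_zero hc hf hsep
    hsep' (hv.smul c⁻¹) (hu.smul c⁻¹) ht
  have h₀ := key (.zero f 0 0)
  rw [star_zero, mul_zero, smul_zero, hΦ.addDefect_zero_left, zero_add] at h₀
  have h₁ := key (hs.star hf.isSelfAdjoint)
  rwa [h₀, add_zero, star_star, smul_mul_assoc, smul_smul, smul_smul, mul_inv_cancel₀ hc,
    one_smul, one_smul] at h₁

theorem addDefect_eq_zero_of_isPeirce_one_zero (hΦ : ScaledJordanLeibniz Φ c d) (hc : c ≠ 0)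
    (hf : IsStarProjection f) (hsep : IsRightSeparating f) (hsep' : IsRightSeparating (1 - f))
    {a b : A} (ha : IsPeirce f 1 0 a) (hb : IsPeirce f 1 0 b) : addDefect Φ a b = 0 := by
  set T := addDefect Φ a b
  have hT : f * T + T * f = T :=
    (starJordan_reflection_eq_zero_iff hf.isSelfAdjoint).mp
      (hΦ.starJordan_addDefect_eq_zero_of_left hc
        ((starJordan_reflection_eq_zero_iff hf.isSelfAdjoint).mpr (ha.mul_add_mul_eq_self rfl)) b)
  have hTf : T * f = 0 :=
    mul_eq_zero_of_forall_starJordan hf hsep hT fun t ht =>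
      hΦ.addDefect_starJordan_eq_zero_of_left hc (ha.starJordan_eq_zero_of_isPeirce_one_one hf ht) b
  have hT₁₀ : IsPeirce f 1 0 T :=
    ⟨by rwa [one_smul, ← add_zero (f * T), ← hTf], by rw [hTf, zero_smul]⟩
  refine hT₁₀.one_sub.eq_zero_of_mul_isPeirce_one_one hf.one_sub.isIdempotentElem hsep'
    fun s hs => ?_
  have hs' := hs.of_one_sub
  have h : starJordan (star s) T = 0 := by
    refine hΦ.starJordan_addDefect_eq_zero hc ?_
    rw [starJordan_star_eq_mul_of_isPeirce hf hs' ha, starJordan_star_eq_mul_of_isPeirce hf hs' hb,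
      ← smul_mul_assoc]
    exact hΦ.addDefect_mul_eq_zero hc hf hsep hsep' (ha.smul c) hs' ((hb.mul hs').smul c)
  rwa [starJordan_star_eq_mul_of_isPeirce hf hs' hT₁₀] at h

theorem addDefect_eq_zero_of_isPeirce_one_one (hΦ : ScaledJordanLeibniz Φ c d) (hc : c ≠ 0)
    (hf : IsStarProjection f) (hsep : IsRightSeparating f) (hsep' : IsRightSeparating (1 - f))
    {a b : A} (ha : IsPeirce f 1 1 a) (hb : IsPeirce f 1 1 b) : addDefect Φ a b = 0 := by
  set T := addDefect Φ a b
  have hT₁₁ : IsPeirce f 1 1 T :=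
    (isPeirce_zero_zero_of_starJordan_eq_zero hf.one_sub
      (hΦ.starJordan_addDefect_eq_zero_of_left hc
        (ha.one_sub.starJordan_idem_eq_zero hf.one_sub.isSelfAdjoint) b)).of_one_sub
  refine hT₁₁.eq_zero_of_mul_isPeirce_one_zero hf.isIdempotentElem hsep' fun t ht => ?_
  have h : starJordan T t = 0 := by
    refine hΦ.addDefect_starJordan_eq_zero hc ?_
    rw [ha.starJordan_eq_mul hf ht, hb.starJordan_eq_mul hf ht]
    exact hΦ.addDefect_eq_zero_of_isPeirce_one_zero hc hf hsep hsep' ((ha.mul ht).smul c)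
      ((hb.mul ht).smul c)
  rwa [hT₁₁.starJordan_eq_mul hf ht] at h

theorem map_add (hΦ : ScaledJordanLeibniz Φ c d) (hc : c ≠ 0) (hf : IsStarProjection f)
    (hsep : IsRightSeparating f) (hsep' : IsRightSeparating (1 - f)) (a b : A) :
    Φ (a + b) = Φ a + Φ b := by
  have hf₁ := hf.isIdempotentElem
  have hsep'' : IsRightSeparating (1 - (1 - f)) := by rwa [sub_sub_cancel]
  have hdecomp (z : A) : Φ z = Φ (f * (z * f)) + Φ (f * (z * (1 - f))) +
      Φ ((1 - f) * (z * f)) + Φ ((1 - f) * (z * (1 - f))) := by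
    conv_lhs => rw [peirce_decomposition f z]
    exact hΦ.map_add_add_add_of_isPeirce hc hf hsep hsep' (isPeirce_one_one_mul_mul hf₁ z)
      (isPeirce_one_zero_mul_mul hf₁ z) (isPeirce_zero_one_mul_mul hf₁ z)
      (isPeirce_zero_zero_mul_mul hf₁ z)
  have h₁₁ := hΦ.addDefect_eq_zero_of_isPeirce_one_one hc hf hsep hsep'
    (isPeirce_one_one_mul_mul hf₁ a) (isPeirce_one_one_mul_mul hf₁ b)
  have h₁₀ := hΦ.addDefect_eq_zero_of_isPeirce_one_zero hc hf hsep hsep'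
    (isPeirce_one_zero_mul_mul hf₁ a) (isPeirce_one_zero_mul_mul hf₁ b)
  have h₀₁ := hΦ.addDefect_eq_zero_of_isPeirce_one_zero hc hf.one_sub hsep' hsep''
    (isPeirce_zero_one_mul_mul hf₁ a).one_sub (isPeirce_zero_one_mul_mul hf₁ b).one_sub
  have h₀₀ := hΦ.addDefect_eq_zero_of_isPeirce_one_one hc hf.one_sub hsep' hsep''
    (isPeirce_zero_zero_mul_mul hf₁ a).one_sub (isPeirce_zero_zero_mul_mul hf₁ b).one_sub
  rw [hdecomp (a + b), hdecomp a, hdecomp b]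
  simp only [mul_add, add_mul]
  rw [addDefect_eq_zero_iff.mp h₁₁, addDefect_eq_zero_iff.mp h₁₀, addDefect_eq_zero_iff.mp h₀₁,
    addDefect_eq_zero_iff.mp h₀₀]
  abel

end ScaledJordanLeibniz

section LastTwoFamily

variable {A : Type*} [NonAssocRing A]

theorem List.ofFn_update {α : Type*} {n : ℕ} (g : Fin n → α) (k : Fin n) (v : α) :
    List.ofFn (Function.update g k v) = (List.ofFn g).set k v := by
  apply List.ext_getElem (by simp)
  intro i h₁ h₂
  simp [List.getElem_set, Function.update_apply, Fin.ext_iff, eq_comm]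

theorem ofFn_lastTwoFamily (j : ℕ) (x y : A) :
    List.ofFn (lastTwoFamily (j + 2) x y) = List.replicate j 1 ++ [x, y] := by
  apply List.ext_getElem (by simp)
  intro i h₁ h₂
  simp only [List.getElem_ofFn, lastTwoFamily, List.getElem_append, List.length_replicate]
  split_ifs <;> simp_all <;> omega

theorem lastTwoFamily_castSucc_castSucc (j : ℕ) (x y : A) (k : Fin j) :
    lastTwoFamily (j + 2) x y k.castSucc.castSucc = 1 := by
  simp [lastTwoFamily, Nat.ne_of_lt k.isLt, Nat.ne_of_lt (Nat.lt_succ_of_lt k.isLt)]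

variable [StarRing A]

theorem leftStarJordan_append_pair {l : List A} (hl : l ≠ []) (x y : A) :
    leftStarJordan (l ++ [x, y]) = starJordan (starJordan (leftStarJordan l) x) y := by
  obtain ⟨a, l, rfl⟩ := List.exists_cons_of_ne_nil hl
  simp [leftStarJordan]

theorem foldl_starJordan_replicate_one (j m : ℕ) (x : A) (l : List A) :
    (List.replicate j 1 ++ x :: l).foldl starJordan (m • 1) =
      l.foldl starJordan ((2 ^ (j + 1) * m) • x) := by
  induction j generalizing m with
  | zero =>
    rw [List.replicate_zero, List.nil_append, List.foldl_cons, starJordan_nsmul_one_left,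
      zero_add, pow_one]
  | succ j ih =>
    rw [List.replicate_succ, List.cons_append, List.foldl_cons, starJordan_nsmul_one_left, ih]
    ring_nf

theorem leftStarJordan_replicate_one_append_pair (j : ℕ) (x y : A) :
    leftStarJordan (List.replicate j 1 ++ [x, y]) = 2 ^ j • starJordan x y := by
  cases j with
  | zero => simp [leftStarJordan]
  | succ j =>
    have h := foldl_starJordan_replicate_one j 1 x [y]
    rw [one_smul, mul_one] at h
    rw [List.replicate_succ, List.cons_append, leftStarJordan, h, List.foldl_cons, List.foldl_nil,
      starJordan_nsmul_left]

theorem scaledJordanLeibniz_of_lastTwoFamily {R : Type*} [Semiring R] [Module R A] {j : ℕ}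
    {Φ : A → A} (hΦ : ∀ x y : A,
      Φ (leftStarJordan (List.ofFn (lastTwoFamily (j + 2) x y))) =
        ∑ k : Fin (j + 2), leftStarJordan (List.ofFn
          (Function.update (lastTwoFamily (j + 2) x y) k (Φ (lastTwoFamily (j + 2) x y k))))) :
    ScaledJordanLeibniz Φ ((2 : R) ^ j)
      (∑ k : Fin j, leftStarJordan ((List.replicate j 1).set k (Φ 1))) := by
  intro x y
  have h := hΦ x y
  simp only [Fin.sum_univ_castSucc, List.ofFn_update, ofFn_lastTwoFamily,
    lastTwoFamily_castSucc_castSucc] at h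
  have hset (k : Fin j) :
      leftStarJordan ((List.replicate j 1 ++ [x, y]).set k.castSucc.castSucc (Φ 1)) =
        starJordan (starJordan (leftStarJordan ((List.replicate j 1).set k (Φ 1))) x) y := by
    rw [Fin.val_castSucc, Fin.val_castSucc, List.set_append_left _ _ (by simp),
      leftStarJordan_append_pair (List.ne_nil_of_length_pos (by simpa using k.pos))]
  simp only [hset, ← starJordan_sum_left] at h
  simpa [List.set_append_right, lastTwoFamily, leftStarJordan_replicate_one_append_pair,
    ← Nat.cast_smul_eq_nsmul R] using h

end LastTwoFamily

theorem stmt_9_general {A : Type*} [NonAssocRing A] [Module ℂ A]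
    [SMulCommClass ℂ A A] [IsScalarTower ℂ A A] [StarRing A]
    (halt₁ : ∀ a b : A, a * a * b = a * (a * b))
    (halt₂ : ∀ a b : A, b * a * a = b * (a * a))
    (e : A) (heStar : star e = e) (heIdem : e * e = e)
    (hsp : ∀ x : A, (∀ r : A, x * r * e = 0) → x = 0)
    (hcl : ∀ x : A, (∀ r : A, x * r * (1 - e) = 0) → x = 0)
    (n : ℕ) (hn : 2 ≤ n) (Φ : A → A)
    (hΦ : ∀ x y : A,
      Φ (leftStarJordan (List.ofFn (lastTwoFamily n x y))) =
        ∑ k : Fin n, leftStarJordan (List.ofFn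
          (Function.update (lastTwoFamily n x y) k (Φ (lastTwoFamily n x y k))))) :
    ∀ a b : A, Φ (a + b) = Φ a + Φ b := by
  have : IsAlternative A := ⟨halt₁, halt₂⟩
  have : IsAddTorsionFree A := .of_isTorsionFree ℂ A
  obtain ⟨j, rfl⟩ : ∃ j, n = j + 2 := ⟨n - 2, by omega⟩
  exact (scaledJordanLeibniz_of_lastTwoFamily (R := ℂ) hΦ).map_add (pow_ne_zero j two_ne_zero)
    ⟨heIdem, heStar⟩ hsp hcl

theorem stmt_9 {A : Type*} [NonAssocRing A] [Module ℂ A]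
    [SMulCommClass ℂ A A] [IsScalarTower ℂ A A] [StarRing A]
    (halt₁ : ∀ a b : A, a * a * b = a * (a * b))
    (halt₂ : ∀ a b : A, b * a * a = b * (a * a))
    (e : A) (heStar : star e = e) (heIdem : e * e = e) (he0 : e ≠ 0) (he1 : e ≠ 1)
    (hsp : ∀ x : A, (∀ r : A, x * r * e = 0) → x = 0)
    (hcl : ∀ x : A, (∀ r : A, x * r * (1 - e) = 0) → x = 0)
    (n : ℕ) (hn : 2 ≤ n) (Φ : A → A)
    (hΦ : ∀ x y : A,
      Φ (leftStarJordan (List.ofFn (lastTwoFamily n x y))) =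
        ∑ k : Fin n, leftStarJordan (List.ofFn
          (Function.update (lastTwoFamily n x y) k (Φ (lastTwoFamily n x y k))))) :
    ∀ a b : A, Φ (a + b) = Φ a + Φ b :=
  stmt_9_general halt₁ halt₂ e heStar heIdem hsp hcl n hn Φ hΦ
end

section
/- Let A be a unital alternative *-algebra over ℂ containing a nontrivial symmetric idempotent e satisfying conditions (♠) and (♣), and let Φ : A → A be a map satisfying the *-Jordan n-derivation identity in the last two slots. Then Φ(a • b) = Φ(a) • b + a • Φ(b) for all a, b ∈ A. -/
set_option linter.unusedSectionVars false
set_option linter.unusedVariables false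
set_option maxHeartbeats 1000000
section Aux
variable {A : Type*} [NonAssocRing A] [Module ℂ A] [SMulCommClass ℂ A A]
  [IsScalarTower ℂ A A] [StarRing A]

local notation "J" => starJordan (A := A)

lemma J_def (a b : A) : J a b = a * b + b * star a := rfl

lemma J_add_left (a b c : A) : J (a + b) c = J a c + J b c := by
  simp only [J_def, star_add, add_mul, mul_add]; abel

lemma J_add_right (a b c : A) : J a (b + c) = J a b + J a c := by
  simp only [J_def, add_mul, mul_add]; abel

lemma J_zero_left (a : A) : J 0 a = 0 := by simp [J_def]

lemma J_zero_right (a : A) : J a 0 = 0 := by simp [J_def]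

lemma J_sub_left (a b c : A) : J (a - b) c = J a c - J b c := by
  simp only [J_def, star_sub, sub_mul, mul_sub]; abel

/-- star commutes with rational scalars. -/
lemma star_ratsmul (q : ℚ) (a : A) : star ((q:ℂ) • a) = (q:ℂ) • star a := by
  have hnat : ∀ (m : ℕ) (b : A), star ((m:ℂ) • b) = (m:ℂ) • star b := by
    intro m b
    rw [Nat.cast_smul_eq_nsmul, Nat.cast_smul_eq_nsmul, star_nsmul]
  have hint : ∀ (z : ℤ) (b : A), star ((z:ℂ) • b) = (z:ℂ) • star b := by
    intro z b
    rw [Int.cast_smul_eq_zsmul, Int.cast_smul_eq_zsmul, star_zsmul]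
  have hden : ((q.den : ℂ)) ≠ 0 := by
    exact_mod_cast Nat.cast_ne_zero.mpr q.den_nz
  have key : ((q.den : ℂ)) • star ((q:ℂ) • a) = ((q.den : ℂ)) • ((q:ℂ) • star a) := by
    have h1 : ((q.den : ℂ)) • ((q:ℂ) • a) = ((q.num : ℂ)) • a := by
      rw [smul_smul]
      congr 1
      push_cast
      rw [mul_comm]
      norm_cast
      exact Rat.mul_den_eq_num q
    calc ((q.den : ℂ)) • star ((q:ℂ) • a) = star (((q.den : ℂ)) • ((q:ℂ) • a)) := (hnat _ _).symm
      _ = star (((q.num : ℂ)) • a) := by rw [h1]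
      _ = ((q.num : ℂ)) • star a := hint _ _
      _ = ((q.den : ℂ)) • ((q:ℂ) • star a) := by
          rw [smul_smul]; congr 1; push_cast
          rw [mul_comm]
          norm_cast
          exact (Rat.mul_den_eq_num q).symm
  have := congrArg (fun z => ((q.den : ℂ))⁻¹ • z) key
  simpa [inv_smul_smul₀ hden] using this

lemma J_qsmul_left (q : ℚ) (a b : A) : J ((q:ℂ) • a) b = (q:ℂ) • J a b := by
  rw [J_def, J_def, star_ratsmul, smul_mul_assoc, mul_smul_comm, smul_add]

lemma J_qsmul_right (q : ℚ) (a b : A) : J a ((q:ℂ) • b) = (q:ℂ) • J a b := by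
  simp only [J_def, smul_mul_assoc, mul_smul_comm, smul_add]

lemma J_one_left (a : A) : J 1 a = ((2:ℚ):ℂ) • a := by
  simp only [J_def, one_mul, star_one, mul_one]
  norm_num [two_smul]

lemma J_one_right (a : A) : J a 1 = a + star a := by
  simp [J_def]

lemma qsmul_cancel {q : ℚ} (hq : q ≠ 0) {a b : A} (h : (q:ℂ) • a = (q:ℂ) • b) : a = b := by
  have hq' : (q:ℂ) ≠ 0 := by exact_mod_cast hq
  have := congrArg (fun z => ((q:ℂ))⁻¹ • z) h
  simpa [inv_smul_smul₀ hq'] using this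

lemma qsmul_qsmul (q r : ℚ) (a : A) : (q:ℂ) • ((r:ℂ) • a) = ((q*r : ℚ):ℂ) • a := by
  rw [smul_smul]; norm_cast

lemma qsmul_congr {q r : ℚ} (h : q = r) (a : A) : (q:ℂ) • a = (r:ℂ) • a := by rw [h]


/-- The additive map `a ↦ a + star a`. -/
def gH : A →+ A where
  toFun a := a + star a
  map_zero' := by simp
  map_add' a b := by simp only [star_add]; abel

lemma gH_apply (a : A) : gH a = a + star a := rfl

lemma J_one_right' (a : A) : J a 1 = gH a := (J_one_right a).symm ▸ rfl

lemma gH_ratsmul (q : ℚ) (a : A) : gH ((q:ℂ) • a) = (q:ℂ) • gH a := by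
  simp only [gH_apply, star_ratsmul, smul_add]

lemma gH_iter_ratsmul (i : ℕ) (q : ℚ) (a : A) :
    gH^[i] ((q:ℂ) • a) = (q:ℂ) • gH^[i] a := by
  induction i generalizing a with
  | zero => simp
  | succ i ih =>
    rw [Function.iterate_succ_apply, Function.iterate_succ_apply, gH_ratsmul, ih]

lemma gH_one : gH (1:A) = ((2:ℚ):ℂ) • 1 := by
  simp only [gH_apply, star_one]
  norm_num [two_smul]

lemma gH_iter_one (i : ℕ) : gH^[i] (1:A) = (((2:ℚ)^i : ℚ):ℂ) • 1 := by
  induction i with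
  | zero => norm_num
  | succ i ih =>
    rw [Function.iterate_succ_apply, gH_one, gH_iter_ratsmul, ih, qsmul_qsmul]
    exact qsmul_congr (by ring) 1

lemma fold_replicate_one (i : ℕ) (a : A) :
    List.foldl J a (List.replicate i (1:A)) = gH^[i] a := by
  induction i generalizing a with
  | zero => simp
  | succ i ih =>
    rw [List.replicate_succ, List.foldl_cons, ih, Function.iterate_succ_apply]
    congr 1
    rw [J_one_right, gH_apply]

lemma J_one_left_smul (q : ℚ) (a : A) : J ((q:ℂ) • (1:A)) a = ((2*q:ℚ):ℂ) • a := by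
  rw [J_qsmul_left, J_one_left, qsmul_qsmul]
  exact qsmul_congr (by ring) a

/-- value of the left-normed product of `replicate m 1 ++ [x, y]`. -/
lemma leftJ_main (m : ℕ) (x y : A) :
    leftStarJordan (List.replicate m (1:A) ++ [x, y]) = (((2:ℚ)^m : ℚ):ℂ) • J x y := by
  cases m with
  | zero => simp [leftStarJordan]
  | succ m =>
    rw [List.replicate_succ, List.cons_append]
    show List.foldl J 1 (List.replicate m (1:A) ++ [x,y]) = _
    rw [List.foldl_append, fold_replicate_one, gH_iter_one]
    show J (J ((((2:ℚ)^m : ℚ):ℂ) • 1) x) y = _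
    rw [J_one_left_smul, J_qsmul_left]
    exact qsmul_congr (by ring) _

/-- value of the left-normed product of `replicate j 1 ++ p :: (replicate i 1 ++ [x, y])`. -/
lemma leftJ_mid (j i : ℕ) (p x y : A) :
    leftStarJordan (List.replicate j (1:A) ++ p :: (List.replicate i (1:A) ++ [x, y]))
      = J (J (gH^[i] ((((2:ℚ)^j : ℚ):ℂ) • p)) x) y := by
  cases j with
  | zero =>
    show List.foldl J p (List.replicate i (1:A) ++ [x,y]) = _
    rw [List.foldl_append, fold_replicate_one]
    show J (J (gH^[i] p) x) y = _
    norm_num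
  | succ j =>
    rw [List.replicate_succ, List.cons_append]
    have h0 : leftStarJordan (1 :: (List.replicate j (1:A) ++ p :: (List.replicate i 1 ++ [x,y])))
        = List.foldl J 1 (List.replicate j (1:A) ++ p :: (List.replicate i 1 ++ [x,y])) := rfl
    rw [h0, List.foldl_append, fold_replicate_one, gH_iter_one, List.foldl_cons,
      J_one_left_smul, List.foldl_append, fold_replicate_one]
    simp only [List.foldl_cons, List.foldl_nil]
    have hc : ((2*(2:ℚ)^j:ℚ):ℂ) • p = (((2:ℚ)^(j+1) : ℚ):ℂ) • p := qsmul_congr (by ring) p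
    rw [hc]

/-- value with `Φx` in slot `n-2`. -/
lemma leftJ_snd (m : ℕ) (u y : A) :
    leftStarJordan (List.replicate m (1:A) ++ [u, y]) = (((2:ℚ)^m : ℚ):ℂ) • J u y :=
  leftJ_main m u y

lemma getElem_shape1 (m i : ℕ) (x y : A) (hi : i < (List.replicate m (1:A) ++ [x,y]).length) :
    (List.replicate m (1:A) ++ [x,y])[i] = if i < m then 1 else if i = m then x else y := by
  simp only [List.length_append, List.length_replicate, List.length_cons, List.length_nil] at hi
  by_cases h1 : i < m
  · rw [List.getElem_append_left (by simpa using h1), List.getElem_replicate, if_pos h1]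
  · by_cases h2 : i = m
    · rw [List.getElem_append_right (by simp; omega)]
      simp only [List.length_replicate, show i - m = 0 from by omega]
      simp [h1, h2]
    · rw [List.getElem_append_right (by simp; omega)]
      simp only [List.length_replicate, show i - m = 1 from by omega]
      simp [h1, h2]

lemma getElem_shape2 (j i' i : ℕ) (v x y : A)
    (hi : i < (List.replicate j (1:A) ++ v :: (List.replicate i' (1:A) ++ [x,y])).length) :
    (List.replicate j (1:A) ++ v :: (List.replicate i' (1:A) ++ [x,y]))[i]
      = if i < j then 1 else if i = j then v
        else if i < j + 1 + i' then 1 else if i = j + 1 + i' then x else y := by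
  simp only [List.length_append, List.length_replicate, List.length_cons, List.length_nil] at hi
  by_cases h1 : i < j
  · rw [List.getElem_append_left (by simpa using h1), List.getElem_replicate, if_pos h1]
  · rw [List.getElem_append_right (by simp; omega)]
    simp only [List.length_replicate]
    by_cases h2 : i = j
    · simp only [show i - j = 0 from by omega]
      simp [h1, h2]
    · obtain ⟨d, hd⟩ : ∃ d, i - j = d + 1 := ⟨i - j - 1, by omega⟩
      simp only [hd, List.getElem_cons_succ]
      by_cases h5 : i < j + 1 + i'
      · rw [List.getElem_append_left (by simp; omega), List.getElem_replicate]
        simp only [if_neg h1, if_neg h2, if_pos h5]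
      · rw [List.getElem_append_right (by simp; omega)]
        simp only [List.length_replicate]
        by_cases h6 : i = j + 1 + i'
        · simp only [show d - i' = 0 from by omega, List.getElem_cons_zero]
          rw [if_neg h1, if_neg h2, if_neg h5, if_pos h6]
        · simp only [show d - i' = 1 from by omega, List.getElem_cons_succ,
            List.getElem_cons_zero]
          rw [if_neg h1, if_neg h2, if_neg h5, if_neg h6]


lemma ofFn_eq {n : ℕ} (f : Fin n → A) (l : List A) (hl : l.length = n)
    (h : ∀ (i : ℕ) (hi : i < n), l[i]'(by omega) = f ⟨i, hi⟩) : List.ofFn f = l := by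
  apply List.ext_getElem (by simp [hl])
  intro i h1 h2
  rw [List.getElem_ofFn]
  exact (h i (by simpa using h1)).symm

lemma ofFn_fam (m : ℕ) (x y : A) :
    List.ofFn (lastTwoFamily (m+2) x y) = List.replicate m (1:A) ++ [x, y] := by
  apply ofFn_eq _ _ (by simp)
  intro i hi
  rw [getElem_shape1]
  simp only [lastTwoFamily]
  norm_num
  split_ifs <;> first | rfl | omega

lemma ofFn_upd_x (m : ℕ) (x y v : A) :
    List.ofFn (Function.update (lastTwoFamily (m+2) x y) ⟨m, by omega⟩ v)
      = List.replicate m (1:A) ++ [v, y] := by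
  apply ofFn_eq _ _ (by simp)
  intro i hi
  rw [getElem_shape1]
  simp only [Function.update_apply, lastTwoFamily, Fin.mk.injEq, Fin.ext_iff]
  norm_num
  split_ifs <;> first | rfl | omega

lemma ofFn_upd_y (m : ℕ) (x y v : A) :
    List.ofFn (Function.update (lastTwoFamily (m+2) x y) ⟨m+1, by omega⟩ v)
      = List.replicate m (1:A) ++ [x, v] := by
  apply ofFn_eq _ _ (by simp)
  intro i hi
  rw [getElem_shape1]
  simp only [Function.update_apply, lastTwoFamily, Fin.mk.injEq, Fin.ext_iff]
  norm_num
  split_ifs <;> first | rfl | omega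

lemma ofFn_upd_mid (m j : ℕ) (hj : j < m) (x y v : A) :
    List.ofFn (Function.update (lastTwoFamily (m+2) x y) ⟨j, by omega⟩ v)
      = List.replicate j (1:A) ++ v :: (List.replicate (m-1-j) (1:A) ++ [x, y]) := by
  apply ofFn_eq _ _ (by simp; omega)
  intro i hi
  rw [getElem_shape2]
  simp only [Function.update_apply, lastTwoFamily, Fin.mk.injEq, Fin.ext_iff]
  norm_num
  split_ifs <;> first | rfl | omega

lemma star_sigma (p : A) : star (p + star p) = p + star p := by
  rw [star_add, star_star, add_comm]

lemma gH_sigma (p : A) : gH (p + star p) = ((2:ℚ):ℂ) • (p + star p) := by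
  rw [gH_apply, star_sigma]
  norm_num [two_smul]
  abel

/-- closed form for the sum of the `Φ(1)`-terms. -/
lemma sum_W (M : ℕ) (p : A) :
    ∑ j ∈ Finset.range (M+1), gH^[M-j] ((((2:ℚ)^j : ℚ):ℂ) • p)
      = (((2:ℚ)^M : ℚ):ℂ) • p + ((((M:ℚ) * 2^M / 2) : ℚ):ℂ) • (p + star p) := by
  induction M with
  | zero => simp
  | succ M ih =>
    rw [Finset.sum_range_succ]
    have hstep : ∀ j ∈ Finset.range (M+1),
        gH^[M+1-j] ((((2:ℚ)^j : ℚ):ℂ) • p) = gH (gH^[M-j] ((((2:ℚ)^j : ℚ):ℂ) • p)) := by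
      intro j hj
      simp only [Finset.mem_range] at hj
      rw [show M+1-j = (M-j)+1 from by omega, Function.iterate_succ_apply']
    rw [Finset.sum_congr rfl hstep, ← map_sum, ih]
    rw [map_add, gH_ratsmul, gH_ratsmul, gH_sigma, gH_apply, Nat.sub_self,
      Function.iterate_zero_apply]
    match_scalars <;> push_cast <;> ring

/-- `a ↦ J (J a x) y` as an additive map. -/
def JJh (x y : A) : A →+ A where
  toFun a := J (J a x) y
  map_zero' := by
    show J (J 0 x) y = 0
    rw [J_zero_left, J_zero_left]
  map_add' a b := by
    show J (J (a+b) x) y = J (J a x) y + J (J b x) y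
    rw [J_add_left, J_add_left]

lemma JJh_apply (x y a : A) : JJh x y a = J (J a x) y := rfl

lemma fam_lt (m j : ℕ) (hj : j < m) (x y : A) (h : j < m+2) :
    lastTwoFamily (m+2) x y ⟨j, h⟩ = 1 := by
  have h2 : (m+2)-2 = m := by omega
  have h1 : (m+2)-1 = m+1 := by omega
  simp only [lastTwoFamily, h1, h2]
  split_ifs <;> first | rfl | omega

lemma fam_x (m : ℕ) (x y : A) (h : m < m+2) :
    lastTwoFamily (m+2) x y ⟨m, h⟩ = x := by
  have h2 : (m+2)-2 = m := by omega
  have h1 : (m+2)-1 = m+1 := by omega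
  simp only [lastTwoFamily, h1, h2]
  split_ifs <;> first | rfl | omega

lemma fam_y (m : ℕ) (x y : A) (h : m+1 < m+2) :
    lastTwoFamily (m+2) x y ⟨m+1, h⟩ = y := by
  have h2 : (m+2)-2 = m := by omega
  have h1 : (m+2)-1 = m+1 := by omega
  simp only [lastTwoFamily, h1, h2]
  split_ifs <;> first | rfl | omega

lemma expand (Φ : A → A) (m : ℕ) (x y : A)
    (h : Φ (leftStarJordan (List.ofFn (lastTwoFamily (m+2) x y))) =
      ∑ k : Fin (m+2), leftStarJordan (List.ofFn
        (Function.update (lastTwoFamily (m+2) x y) k (Φ (lastTwoFamily (m+2) x y k))))) :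
    Φ ((((2:ℚ)^m : ℚ):ℂ) • J x y)
      = J (J (∑ j ∈ Finset.range m, gH^[m-1-j] ((((2:ℚ)^j : ℚ):ℂ) • (Φ 1))) x) y
        + (((2:ℚ)^m : ℚ):ℂ) • J (Φ x) y + (((2:ℚ)^m : ℚ):ℂ) • J x (Φ y) := by
  rw [ofFn_fam, leftJ_main] at h
  rw [Fin.sum_univ_castSucc, Fin.sum_univ_castSucc] at h
  have hlast : Fin.last (m+1) = (⟨m+1, by omega⟩ : Fin (m+2)) := rfl
  have hmid : (Fin.last m).castSucc = (⟨m, by omega⟩ : Fin (m+2)) := rfl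
  rw [hlast, hmid, fam_x, fam_y, ofFn_upd_x, ofFn_upd_y, leftJ_main, leftJ_main] at h
  have hterm : ∀ (k : Fin m),
      leftStarJordan (List.ofFn (Function.update (lastTwoFamily (m+2) x y)
          (k.castSucc.castSucc) (Φ (lastTwoFamily (m+2) x y (k.castSucc.castSucc)))))
        = JJh x y (gH^[m-1-(k:ℕ)] ((((2:ℚ)^(k:ℕ) : ℚ):ℂ) • (Φ 1))) := by
    intro k
    have hk : k.castSucc.castSucc = (⟨(k:ℕ), by omega⟩ : Fin (m+2)) := rfl
    rw [hk, fam_lt m k k.isLt, ofFn_upd_mid m k k.isLt, leftJ_mid, JJh_apply]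
  rw [Finset.sum_congr rfl (fun k _ => hterm k), ← map_sum] at h
  rw [Fin.sum_univ_eq_sum_range (fun j => gH^[m-1-j] ((((2:ℚ)^j : ℚ):ℂ) • (Φ 1))) m] at h
  rw [h, JJh_apply]

/-- the scalar-defect element. -/
noncomputable def delta (Φ : A → A) (t : ℚ) : A := ((1/2 : ℚ):ℂ) • (Φ ((t:ℂ)•(1:A)) - (t:ℂ)•(Φ 1))

lemma core (Φ : A → A) (m : ℕ)
    (H : ∀ x y : A,
      Φ ((((2:ℚ)^(m+1) : ℚ):ℂ) • J x y) =
        J (J ((((2:ℚ)^m : ℚ):ℂ) • (Φ 1) + ((((m:ℚ) * 2^m / 2) : ℚ):ℂ) • (Φ 1 + star (Φ 1))) x) y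
          + (((2:ℚ)^(m+1) : ℚ):ℂ) • J (Φ x) y + (((2:ℚ)^(m+1) : ℚ):ℂ) • J x (Φ y)) :
    ∀ x y : A, Φ (J x y) = J (Φ x) y + J x (Φ y) := by
  have C2 : ∀ (t : ℚ) (z : A), Φ ((t:ℂ)•z) = (t:ℂ)•Φ z + J (delta Φ t) z := by
    intro t z
    have h1 := H ((t:ℂ)•(1:A)) z
    have h2 := H 1 ((t:ℂ)•z)
    simp only [J_qsmul_left, J_qsmul_right, J_one_left, J_one_right, qsmul_qsmul] at h1 h2
    have goal2 : ((2*(2:ℚ)^(m+1) : ℚ):ℂ) • Φ ((t:ℂ)•z)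
        = ((2*(2:ℚ)^(m+1) : ℚ):ℂ) • ((t:ℂ)•Φ z + J (delta Φ t) z) := by
      simp only [delta, J_qsmul_left, J_sub_left, qsmul_qsmul]
      ring_nf at h1 h2 ⊢
      linear_combination (norm := (match_scalars <;> push_cast <;> ring_nf)) h1 - h2
    exact qsmul_cancel (by positivity) goal2
  -- C3 : delta is symmetric
  have C3 : ∀ t : ℚ, star (delta Φ t) = delta Φ t := by
    intro t
    have h := C2 t 1
    rw [J_one_right] at h
    have hd2 : Φ ((t:ℂ)•(1:A)) - (t:ℂ)•(Φ 1) = ((2:ℚ):ℂ)• delta Φ t := by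
      simp only [delta, qsmul_qsmul]
      match_scalars <;> push_cast <;> ring
    have hd : delta Φ t + star (delta Φ t) = ((2:ℚ):ℂ)• delta Φ t := by
      rw [← hd2]
      linear_combination (norm := module) -h
    have h2 : ((2:ℚ):ℂ)•delta Φ t = delta Φ t + delta Φ t := by
      have h22 : ((2:ℚ):ℂ) = (2:ℂ) := by norm_num
      rw [h22, two_smul]
    rw [h2] at hd
    exact add_left_cancel hd
  -- C4 : delta is Jordan-central
  have C4a : ∀ (t : ℚ) (x y : A), J (delta Φ t) (J x y) = J (J (delta Φ t) x) y := by
    intro t x y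
    have h1 := H ((t:ℂ)•x) y
    have h0 := H x y
    simp only [J_qsmul_left, J_qsmul_right, qsmul_qsmul] at h1
    have harg : (((2:ℚ)^(m+1)*t : ℚ):ℂ)•J x y
        = (t:ℂ)•((((2:ℚ)^(m+1):ℚ)):ℂ)•(J x y) := by
      rw [qsmul_qsmul]; exact qsmul_congr (by ring) _
    rw [harg, C2 t, C2 t x, h0] at h1
    simp only [J_add_left, J_qsmul_left, J_qsmul_right, qsmul_qsmul] at h1
    have goal2 : (((2:ℚ)^(m+1) : ℚ):ℂ) • J (delta Φ t) (J x y)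
        = (((2:ℚ)^(m+1) : ℚ):ℂ) • J (J (delta Φ t) x) y := by
      ring_nf at h1 ⊢
      linear_combination (norm := (match_scalars <;> push_cast <;> ring_nf)) h1
    exact qsmul_cancel (by positivity) goal2
  have C4b : ∀ (t : ℚ) (x y : A), J (delta Φ t) (J x y) = J x (J (delta Φ t) y) := by
    intro t x y
    have h1 := H x ((t:ℂ)•y)
    have h0 := H x y
    simp only [J_qsmul_left, J_qsmul_right, qsmul_qsmul] at h1
    have harg : (((2:ℚ)^(m+1)*t : ℚ):ℂ)•J x y
        = (t:ℂ)•((((2:ℚ)^(m+1):ℚ)):ℂ)•(J x y) := by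
      rw [qsmul_qsmul]; exact qsmul_congr (by ring) _
    rw [harg, C2 t, C2 t y, h0] at h1
    simp only [J_add_right, J_add_left, J_qsmul_left, J_qsmul_right, qsmul_qsmul] at h1
    have goal2 : (((2:ℚ)^(m+1) : ℚ):ℂ) • J (delta Φ t) (J x y)
        = (((2:ℚ)^(m+1) : ℚ):ℂ) • J x (J (delta Φ t) y) := by
      ring_nf at h1 ⊢
      linear_combination (norm := (match_scalars <;> push_cast <;> ring_nf)) h1
    exact qsmul_cancel (by positivity) goal2
  -- C5 : delta is a derivation in the scalar variable
  have C5gen : ∀ (t s : ℚ) (x y : A), J (delta Φ (t*s)) (J x y)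
      = (s:ℂ) • J (delta Φ t) (J x y) + (t:ℂ) • J (delta Φ s) (J x y) := by
    intro t s x y
    have h1 := H ((t:ℂ)•x) ((s:ℂ)•y)
    have h0 := H x y
    simp only [J_qsmul_left, J_qsmul_right, qsmul_qsmul] at h1
    have harg : (((2:ℚ)^(m+1)*(s*t) : ℚ):ℂ)•J x y
        = (((t*s : ℚ)):ℂ)•((((2:ℚ)^(m+1):ℚ)):ℂ)•(J x y) := by
      rw [qsmul_qsmul]; exact qsmul_congr (by ring) _
    rw [harg, C2 (t*s), C2 t x, C2 s y, h0] at h1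
    simp only [J_add_right, J_add_left, J_qsmul_left, J_qsmul_right, qsmul_qsmul] at h1
    rw [← C4a t x y, ← C4b s x y] at h1
    have goal2 : (((2:ℚ)^(m+1) : ℚ):ℂ) • J (delta Φ (t*s)) (J x y)
        = (((2:ℚ)^(m+1) : ℚ):ℂ) • ((s:ℂ) • J (delta Φ t) (J x y) + (t:ℂ) • J (delta Φ s) (J x y)) := by
      ring_nf at h1 ⊢
      linear_combination (norm := (match_scalars <;> push_cast <;> ring_nf)) h1
    exact qsmul_cancel (by positivity) goal2
  have d1 : delta Φ 1 = 0 := by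
    simp [delta]
  have C5 : ∀ (t s : ℚ), delta Φ (t*s) = (s:ℂ) • delta Φ t + (t:ℂ) • delta Φ s := by
    intro t s
    have h := C5gen t s 1 (((1/2 : ℚ):ℂ) • 1)
    have harg : J (1:A) (((1/2 : ℚ):ℂ) • 1) = 1 := by
      rw [J_qsmul_right, J_one_left, qsmul_qsmul]
      norm_num
    rw [harg, J_one_right, J_one_right, J_one_right, C3, C3, C3] at h
    have goal2 : ((2:ℚ):ℂ) • delta Φ (t*s)
        = ((2:ℚ):ℂ) • ((s:ℂ) • delta Φ t + (t:ℂ) • delta Φ s) := by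
      linear_combination (norm := (match_scalars <;> push_cast <;> ring)) h
    exact qsmul_cancel (by norm_num) goal2
  -- C6 : delta on powers of two
  have C6 : ∀ j : ℕ, delta Φ ((2:ℚ)^j) = (((j:ℚ)*2^j/2 : ℚ):ℂ) • delta Φ 2 := by
    intro j
    induction j with
    | zero =>
      simpa using d1
    | succ j ih =>
      have h := C5 ((2:ℚ)^j) 2
      rw [← pow_succ] at h
      rw [h, ih]
      match_scalars <;> push_cast <;> ring
  -- abbreviations
  set P := Φ 1 with hPdef
  set S := P + star P with hSdef
  set QQ := (((2:ℚ)^m : ℚ):ℂ) • P + ((((m:ℚ) * 2^m / 2) : ℚ):ℂ) • S with hQdef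
  have hSstar : star S = S := by rw [hSdef, star_add, star_star, add_comm]
  have hM : J QQ 1 = ((((m:ℚ)+1) * 2^m : ℚ):ℂ) • S := by
    rw [J_one_right, hQdef]
    simp only [star_add, star_ratsmul, hSstar, star_star]
    rw [hSdef]
    match_scalars <;> push_cast <;> ring
  -- C9
  have C9 : ∀ z : A, J (delta Φ (2*2^(m+1))) z
      = J (J QQ 1) z + (((2:ℚ)^(m+1) : ℚ):ℂ) • J P z := by
    intro z
    have h := H 1 z
    simp only [J_one_left, qsmul_qsmul] at h
    have harg : (((2:ℚ)^(m+1)*2 : ℚ):ℂ) • z = ((2*(2:ℚ)^(m+1) : ℚ):ℂ) • z :=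
      qsmul_congr (by ring) z
    rw [harg, C2 (2*2^(m+1)) z] at h
    linear_combination (norm := (match_scalars <;> push_cast <;> ring)) h
  -- C8
  have C8 : delta Φ (2*2^(m+1)) = ((((m:ℚ)+1) * 2^m + (2:ℚ)^(m+1)/2 : ℚ):ℂ) • S := by
    have h := C9 1
    rw [J_one_right (a := delta Φ (2*2^(m+1))), C3, J_one_right (a := J QQ 1), hM,
      star_ratsmul, hSstar, J_one_right (a := P), ← hSdef] at h
    have goal2 : ((2:ℚ):ℂ) • delta Φ (2*2^(m+1))
        = ((2:ℚ):ℂ) • (((((m:ℚ)+1) * 2^m + (2:ℚ)^(m+1)/2 : ℚ):ℂ) • S) := by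
      linear_combination (norm := (match_scalars <;> push_cast <;> ring)) h
    exact qsmul_cancel (by norm_num) goal2
  -- kc : J S z = 2 • J P z
  have kc : ∀ z : A, J S z = ((2:ℚ):ℂ) • J P z := by
    intro z
    have h9 := C9 z
    rw [hM, J_qsmul_left, C8, J_qsmul_left] at h9
    have goal2 : (((2:ℚ)^(m+1)/2 : ℚ):ℂ) • J S z
        = (((2:ℚ)^(m+1)/2 : ℚ):ℂ) • (((2:ℚ):ℂ) • J P z) := by
      linear_combination (norm := (match_scalars <;> push_cast <;> ring)) h9
    exact qsmul_cancel (by positivity) goal2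
  -- C10 : delta 2
  have C10 : delta Φ 2 = ((1/2 : ℚ):ℂ) • S := by
    have h5 := C5 2 ((2:ℚ)^(m+1))
    rw [C6 (m+1), C8] at h5
    have goal2 : ((((m:ℚ)+2) * 2^(m+1) : ℚ):ℂ) • delta Φ 2
        = ((((m:ℚ)+2) * 2^(m+1) : ℚ):ℂ) • (((1/2 : ℚ):ℂ) • S) := by
      linear_combination (norm := (match_scalars <;> push_cast <;> ring)) -h5
    exact qsmul_cancel (by positivity) goal2
  -- C12 : delta (1/2^(m+1))
  have C12 : delta Φ (1/2^(m+1)) = (((-((m:ℚ)+1)/2^(m+1)/4) : ℚ):ℂ) • S := by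
    have h5 := C5 ((2:ℚ)^(m+1)) (1/2^(m+1))
    have harg : ((2:ℚ)^(m+1) * (1/2^(m+1)) : ℚ) = 1 := by
      field_simp
    rw [harg, d1, C6 (m+1), C10] at h5
    have goal2 : (((2:ℚ)^(m+1):ℚ):ℂ) • delta Φ (1/2^(m+1))
        = (((2:ℚ)^(m+1):ℚ):ℂ) • ((((-((m:ℚ)+1)/2^(m+1)/4) : ℚ):ℂ) • S) := by
      linear_combination (norm := (match_scalars <;> push_cast <;> (field_simp; try ring))) -h5
    exact qsmul_cancel (by positivity) goal2
  -- final step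
  intro x y
  have h := H x (((1/2^(m+1) : ℚ):ℂ) • y)
  simp only [J_qsmul_right, qsmul_qsmul] at h
  have harg : ((2:ℚ)^(m+1)*(1/2^(m+1)) : ℚ) = 1 := by field_simp
  rw [harg, Rat.cast_one, one_smul, one_smul] at h
  rw [C2 (1/2^(m+1)) y] at h
  simp only [J_add_right, J_qsmul_right, qsmul_qsmul] at h
  rw [← C4b (1/2^(m+1)) x y, C4a (1/2^(m+1)) x y] at h
  rw [C12, J_qsmul_left, J_qsmul_left] at h
  rw [hQdef] at h
  simp only [J_add_left, J_qsmul_left] at h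
  rw [kc x, J_qsmul_left] at h
  linear_combination (norm := (match_scalars <;> push_cast <;> (field_simp; try ring))) h

end Aux

theorem stmt_13 {A : Type*} [NonAssocRing A] [Module ℂ A]
    [SMulCommClass ℂ A A] [IsScalarTower ℂ A A] [StarRing A]
    (halt₁ : ∀ a b : A, a * a * b = a * (a * b))
    (halt₂ : ∀ a b : A, b * a * a = b * (a * a))
    (e : A) (heStar : star e = e) (heIdem : e * e = e) (he0 : e ≠ 0) (he1 : e ≠ 1)
    (hsp : ∀ x : A, (∀ r : A, x * r * e = 0) → x = 0)
    (hcl : ∀ x : A, (∀ r : A, x * r * (1 - e) = 0) → x = 0)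
    (n : ℕ) (hn : 2 ≤ n) (Φ : A → A)
    (hΦ : ∀ x y : A,
      Φ (leftStarJordan (List.ofFn (lastTwoFamily n x y))) =
        ∑ k : Fin n, leftStarJordan (List.ofFn
          (Function.update (lastTwoFamily n x y) k (Φ (lastTwoFamily n x y k))))) :
    ∀ a b : A, Φ (starJordan a b) = starJordan (Φ a) b + starJordan a (Φ b) := by
  intro a b
  obtain ⟨m, rfl⟩ : ∃ m, n = m + 2 := ⟨n - 2, by omega⟩
  cases m with
  | zero =>
    have h := expand Φ 0 a b (hΦ a b)
    simp only [Finset.range_zero, Finset.sum_empty, J_zero_left] at h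
    norm_num at h
    exact h
  | succ m' =>
    apply core Φ m' ?_ a b
    intro x y
    have h := expand Φ (m'+1) x y (hΦ x y)
    simp only [Nat.add_sub_cancel] at h
    rw [sum_W m' (Φ 1)] at h
    exact h
end
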